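/- The simple graph obtained from the complete bipartite graph K_{2,3} by adding an edge between the two vertices of the part of size 2 is not an underlying push clique. -/

import Mathlib

/-- A directed graph `A` on `V` is an oriented graph: irreflexive and asymmetric. -/
def IsOriented {V : Type*} (A : V → V → Prop) : Prop :=
  (∀ v, ¬ A v v) ∧ ∀ u v, A u v → ¬ A v u

/-- `u` and `v` are adjacent in `A`. -/
def Adj {V : Type*} (A : V → V → Prop) (u v : V) : Prop :=
  A u v ∨ A v u

/-- The push of `A` by the vertex set `S`: arcs with exactly one endpoint in `S`
are reversed. -/
def push {V : Type*} (S : Set V) (A : V → V → Prop) (u v : V) : Prop :=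
  (Xor' (u ∈ S) (v ∈ S) ∧ A v u) ∨ (¬ Xor' (u ∈ S) (v ∈ S) ∧ A u v)

/-- `u` and `v` agree on `w`. -/
def AgreeOn {V : Type*} (A : V → V → Prop) (u v w : V) : Prop :=
  (A w u ∧ A w v) ∨ (A u w ∧ A v w)

/-- `u` and `v` disagree on `w`. -/
def DisagreeOn {V : Type*} (A : V → V → Prop) (u v w : V) : Prop :=
  (A u w ∧ A w v) ∨ (A w u ∧ A v w)

/-- `u` and `v` are joined by a directed 2-path in `A`. -/
def TwoPath {V : Type*} (A : V → V → Prop) (u v : V) : Prop :=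
  ∃ w, (A u w ∧ A w v) ∨ (A v w ∧ A w u)

/-- `A` is an oriented clique: any two distinct vertices are adjacent or joined
by a directed 2-path. -/
def IsOrientedClique {V : Type*} (A : V → V → Prop) : Prop :=
  ∀ u v, u ≠ v → Adj A u v ∨ TwoPath A u v

/-- `A` is a push clique: every push of `A` is an oriented clique. -/
def IsPushClique {V : Type*} (A : V → V → Prop) : Prop :=
  ∀ S : Set V, IsOrientedClique (push S A)

/-- `A` is an orientation of the simple graph `G`. -/
def IsOrientationOf {V : Type*} (A : V → V → Prop) (G : SimpleGraph V) : Prop :=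
  IsOriented A ∧ ∀ u v, Adj A u v ↔ G.Adj u v

/-- `G` is an underlying push clique. -/
def IsUnderlyingPushClique {V : Type*} (G : SimpleGraph V) : Prop :=
  ∃ A : V → V → Prop, IsOrientationOf A G ∧ IsPushClique A

/-- `G` is an underlying oriented clique. -/
def IsUnderlyingOrientedClique {V : Type*} (G : SimpleGraph V) : Prop :=
  ∃ A : V → V → Prop, IsOrientationOf A G ∧ IsOrientedClique A

/-!
The three vertices `r₀, r₁, r₂` of the part of size 3 are pairwise non-adjacent, and their common
neighbours are the two vertices `x, y` of the other part. Two non-adjacent vertices of an oriented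
clique must disagree on a common neighbour, since only a directed 2-path can join them; pushing one
of them turns agreement into disagreement, so in a push clique they must also agree on a common
neighbour. Hence each pair `rᵢ, rⱼ` agrees on exactly one of `x, y`, i.e. the truth values of
`rᵢ → x ↔ rᵢ → y` and `rⱼ → x ↔ rⱼ → y` differ for every pair: impossible for three vertices.
-/

section General

variable {V : Type*} {A : V → V → Prop} {u v w : V}

theorem push_iff_xor (S : Set V) :
    push S A u v ↔ (Xor (u ∈ S) (v ∈ S) ∧ A v u) ∨ (¬ Xor (u ∈ S) (v ∈ S) ∧ A u v) :=
  Iff.rfl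

theorem adj_push_iff (S : Set V) : Adj (push S A) u v ↔ Adj A u v := by
  simp only [Adj, push_iff_xor, xor_comm (v ∈ S)]
  tauto

theorem push_empty : push ∅ A = A := by
  ext u v
  simp [push_iff_xor]

theorem disagreeOn_push_singleton (hvu : v ≠ u) (hwu : w ≠ u) :
    DisagreeOn (push {u} A) u v w ↔ AgreeOn A u v w := by
  simp [DisagreeOn, AgreeOn, push_iff_xor, hvu, hwu]

theorem AgreeOn.adj (h : AgreeOn A u v w) : Adj A u w ∧ Adj A v w := by
  unfold Adj
  unfold AgreeOn at h
  tauto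

theorem DisagreeOn.adj (h : DisagreeOn A u v w) : Adj A u w ∧ Adj A v w := by
  unfold Adj
  unfold DisagreeOn at h
  tauto

theorem IsOriented.ne_of_adj (hA : IsOriented A) (h : Adj A u v) : u ≠ v := by
  rintro rfl
  exact hA.1 u (or_self_iff.1 h)

theorem IsOriented.iff_of_agreeOn (hA : IsOriented A) (h : AgreeOn A u v w) :
    A u w ↔ A v w := by
  have := hA.2 u w
  have := hA.2 v w
  unfold AgreeOn at h
  tauto

theorem IsOriented.not_iff_of_disagreeOn (hA : IsOriented A) (h : DisagreeOn A u v w) :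
    ¬ (A u w ↔ A v w) := by
  have := hA.2 u w
  have := hA.2 v w
  unfold DisagreeOn at h
  tauto

theorem IsOrientedClique.exists_disagreeOn (hc : IsOrientedClique A) (huv : u ≠ v)
    (h : ¬ Adj A u v) : ∃ w, DisagreeOn A u v w := by
  obtain ⟨w, hw⟩ := (hc u v huv).resolve_left h
  exact ⟨w, by unfold DisagreeOn; tauto⟩

theorem IsPushClique.isOrientedClique (hp : IsPushClique A) : IsOrientedClique A :=
  push_empty (A := A) ▸ hp ∅

theorem IsPushClique.exists_agreeOn (hA : IsOriented A) (hp : IsPushClique A) (huv : u ≠ v)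
    (h : ¬ Adj A u v) : ∃ w, AgreeOn A u v w := by
  obtain ⟨w, hw⟩ := (hp {u}).exists_disagreeOn huv (by rwa [adj_push_iff])
  have huw : u ≠ w := hA.ne_of_adj ((adj_push_iff _).1 hw.adj.1)
  exact ⟨w, (disagreeOn_push_singleton huv.symm huw.symm).1 hw⟩

end General

/-- `K_{2,3}` plus an edge inside the part of size 2, which is the left summand `Fin 2`. -/
def k23AddEdge : SimpleGraph (Fin 2 ⊕ Fin 3) :=
  SimpleGraph.fromRel fun u v => u.isLeft = true ∨ v.isLeft = true

namespace k23AddEdge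

def ArcsAlike (A : Fin 2 ⊕ Fin 3 → Fin 2 ⊕ Fin 3 → Prop) (i : Fin 3) : Prop :=
  A (.inr i) (.inl 0) ↔ A (.inr i) (.inl 1)

variable {A : Fin 2 ⊕ Fin 3 → Fin 2 ⊕ Fin 3 → Prop}

theorem not_adj_inr_inr (hA : IsOrientationOf A k23AddEdge) (i j : Fin 3) :
    ¬ Adj A (.inr i) (.inr j) := by
  simp [hA.2, k23AddEdge]

theorem exists_eq_inl_of_adj_inr (hA : IsOrientationOf A k23AddEdge) {i : Fin 3}
    {w : Fin 2 ⊕ Fin 3} (h : Adj A (.inr i) w) : ∃ k, w = .inl k := by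
  rw [hA.2] at h
  cases w <;> simp_all [k23AddEdge]

theorem arcsAlike_iff_not (hA : IsOrientationOf A k23AddEdge) (hp : IsPushClique A)
    {i j : Fin 3} (hij : i ≠ j) : ArcsAlike A i ↔ ¬ ArcsAlike A j := by
  have hne : (Sum.inr i : Fin 2 ⊕ Fin 3) ≠ .inr j := Sum.inr_injective.ne hij
  obtain ⟨w, hw⟩ := hp.exists_agreeOn hA.1 hne (not_adj_inr_inr hA i j)
  obtain ⟨w', hw'⟩ := hp.isOrientedClique.exists_disagreeOn hne (not_adj_inr_inr hA i j)
  obtain ⟨k, rfl⟩ := exists_eq_inl_of_adj_inr hA hw.adj.1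
  obtain ⟨k', rfl⟩ := exists_eq_inl_of_adj_inr hA hw'.adj.1
  have hagree := hA.1.iff_of_agreeOn hw
  have hdisagree := hA.1.not_iff_of_disagreeOn hw'
  unfold ArcsAlike
  fin_cases k <;> fin_cases k' <;> tauto

end k23AddEdge

/-- `K_{2,3}` together with an edge between the two vertices of the part of
size 2: two vertices are adjacent iff they are distinct and at least one of
them lies in the part of size 2. -/
theorem stmt_12 :
    ¬ IsUnderlyingPushClique
      (SimpleGraph.fromRel
        (fun u v : Fin 2 ⊕ Fin 3 => u.isLeft = true ∨ v.isLeft = true)) := by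
  rintro ⟨A, hA, hp⟩
  have h01 := k23AddEdge.arcsAlike_iff_not hA hp (i := 0) (j := 1) (by decide)
  have h12 := k23AddEdge.arcsAlike_iff_not hA hp (i := 1) (j := 2) (by decide)
  have h02 := k23AddEdge.arcsAlike_iff_not hA hp (i := 0) (j := 2) (by decide)
  tauto
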